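/- arXiv:2111.08852 — 4 statements merged into one kernel-verified Lean document; each statement's English description precedes it below -/
import Mathlib

section
/- Let f : R^n → (−∞,∞] be proper lsc and prox-bounded with threshold λ_f, g : R^n → R with L-Lipschitz gradient, 0 < λ < min{1/(4L), λ_f}, and inf(f+g) > −∞. Let (x_k) be generated by the FRB scheme: y_k = x_k + λ(∇g(x_{k−1}) − ∇g(x_k)), x_{k+1} ∈ Prox_{λf}(y_k − λ∇g(x_k)). Set z_k = (x_{k+1}, x_k) and H(x,y) = f(x) + g(x) + (1/(4λ))‖x−y‖². Then for all k ≥ 0, (1/(4λ) − L)‖z_k − z_{k−1}‖² ≤ H(z_{k−1}) − H(z_k). -/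
open Filter Topology

variable {H : Type*} [NormedAddCommGroup H] [InnerProductSpace ℝ H]

/-- `v` is a Fréchet subgradient of `f` at `x`. -/
def FSubd (f : H → EReal) (x v : H) : Prop :=
  f x ≠ ⊤ ∧ ∀ ε : ℝ, 0 < ε → ∃ δ : ℝ, 0 < δ ∧ ∀ y : H, ‖y - x‖ < δ →
    f x + (((inner ℝ v (y - x) : ℝ) - ε * ‖y - x‖ : ℝ) : EReal) ≤ f y

/-- `v` is a limiting (Mordukhovich) subgradient of `f` at `x`. -/
def LSubd (f : H → EReal) (x v : H) : Prop :=
  ∃ xs vs : ℕ → H,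
    Tendsto xs atTop (nhds x) ∧
    Tendsto (fun k => f (xs k)) atTop (nhds (f x)) ∧
    (∀ k, FSubd f (xs k) (vs k)) ∧
    Tendsto vs atTop (nhds v)

/-- `f` is proper: never `⊥` and finite somewhere. -/
def ProperFn (f : H → EReal) : Prop :=
  (∀ x, f x ≠ ⊥) ∧ ∃ x, f x ≠ ⊤

/-- The proximal mapping: set of minimizers of `u ↦ f u + (1/(2λ))‖x - u‖²`. -/
def Prox (lam : ℝ) (f : H → EReal) (x : H) : Set H :=
  {y | ∀ u : H, f y + ((1 / (2 * lam) * ‖x - y‖ ^ 2 : ℝ) : EReal)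
      ≤ f u + ((1 / (2 * lam) * ‖x - u‖ ^ 2 : ℝ) : EReal)}

/-- `f` is prox-bounded with threshold (at least) `lf`. -/
def ProxBddWith (f : H → EReal) (lf : ℝ) : Prop :=
  ∀ lam : ℝ, 0 < lam → lam < lf →
    ∃ b : ℝ, ∀ y : H, (b : EReal) ≤ f y + ((1 / (2 * lam) * ‖y‖ ^ 2 : ℝ) : EReal)

/-!
Comparing the proximal point `x_{k+1}` with the competitor `x_k` in the prox problem gives
`f x_{k+1} + ⟪2∇g(x_k) - ∇g(x_{k-1}), x_{k+1} - x_k⟫ + ‖x_{k+1} - x_k‖²/(2λ) ≤ f x_k`.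
The descent lemma bounds `g x_{k+1}` by `g x_k + ⟪∇g(x_k), x_{k+1} - x_k⟫ + (L/2)‖x_{k+1} - x_k‖²`,
and the reflected term `⟪∇g(x_{k-1}) - ∇g(x_k), x_{k+1} - x_k⟫` is at most
`(L/2)(‖x_k - x_{k-1}‖² + ‖x_{k+1} - x_k‖²)` by Cauchy–Schwarz, the Lipschitz bound and AM–GM.
Adding the three inequalities gives the descent of `H`; when `f x_k = ∞` there is nothing to prove.
-/

section Smooth

variable {g : H → ℝ} {g' : H → H} {L : ℝ}

theorem inner_sub_le_of_lipschitz (hlip : ∀ x y, ‖g' x - g' y‖ ≤ L * ‖x - y‖) (a b u : H) :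
    inner ℝ (g' a - g' b) u ≤ L * ‖a - b‖ * ‖u‖ :=
  (real_inner_le_norm _ _).trans (mul_le_mul_of_nonneg_right (hlip a b) (norm_nonneg u))

theorem le_add_inner_add_sq_of_lipschitz_gradient [CompleteSpace H]
    (hdiff : ∀ x, HasGradientAt g (g' x) x)
    (hlip : ∀ x y, ‖g' x - g' y‖ ≤ L * ‖x - y‖) (a b : H) :
    g b ≤ g a + inner ℝ (g' a) (b - a) + L / 2 * ‖b - a‖ ^ 2 := by
  set d := b - a
  have hpath : ∀ t : ℝ, HasDerivAt (fun t => g (a + t • d)) (inner ℝ (g' (a + t • d)) d) t := by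
    intro t
    have hline : HasDerivAt (fun t : ℝ => a + t • d) d t := by
      simpa only [one_smul] using ((hasDerivAt_id' t).smul_const d).const_add a
    exact ((hdiff (a + t • d)).hasFDerivAt.comp_hasDerivAt t hline).congr_deriv (by simp)
  have hbound : ∀ t : ℝ, HasDerivAt
      (fun t => g a + t * inner ℝ (g' a) d + L / 2 * t ^ 2 * ‖d‖ ^ 2)
      (inner ℝ (g' a) d + L * t * ‖d‖ ^ 2) t := by
    intro t
    exact ((((hasDerivAt_id t).mul_const (inner ℝ (g' a) d)).const_add (g a)).add
      (((hasDerivAt_pow 2 t).const_mul (L / 2)).mul_const (‖d‖ ^ 2))).congr_deriv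
        (by simp only [one_mul, Nat.cast_ofNat, Nat.add_one_sub_one, pow_one]; ring)
  have hslope : ∀ t ∈ Set.Ico (0 : ℝ) 1,
      inner ℝ (g' (a + t • d)) d ≤ inner ℝ (g' a) d + L * t * ‖d‖ ^ 2 := by
    intro t ht
    have h := inner_sub_le_of_lipschitz hlip (a + t • d) a d
    rw [inner_sub_left, add_sub_cancel_left, norm_smul, Real.norm_of_nonneg ht.1] at h
    linarith
  have key := image_le_of_deriv_right_le_deriv_boundary
    (fun t _ => (hpath t).continuousAt.continuousWithinAt) (fun t _ => (hpath t).hasDerivWithinAt)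
    (by simp) (fun t _ => (hbound t).continuousAt.continuousWithinAt)
    (fun t _ => (hbound t).hasDerivWithinAt) hslope (Set.right_mem_Icc.2 zero_le_one)
  simpa [d] using key

end Smooth

section Prox

variable {E : Type*} [NormedAddCommGroup E] {lam : ℝ}

theorem ne_top_of_mem_prox {f : E → EReal} {x y u : E} (hy : y ∈ Prox lam f x) (hu : f u ≠ ⊤) :
    f y ≠ ⊤ := by
  intro hytop
  have h := hy u
  rw [hytop, EReal.top_add_of_ne_bot (EReal.coe_ne_bot _)] at h
  exact (EReal.add_lt_top hu (EReal.coe_ne_top _)).ne (top_le_iff.mp h)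

theorem toReal_le_of_mem_prox {f : E → EReal} {x y u : E} (hbot : ∀ x, f x ≠ ⊥)
    (hy : y ∈ Prox lam f x) (hu : f u ≠ ⊤) :
    (f y).toReal + 1 / (2 * lam) * ‖x - y‖ ^ 2 ≤ (f u).toReal + 1 / (2 * lam) * ‖x - u‖ ^ 2 := by
  have h := hy u
  rw [← EReal.coe_toReal (ne_top_of_mem_prox hy hu) (hbot y), ← EReal.coe_toReal hu (hbot u)] at h
  exact_mod_cast h

theorem toReal_add_inner_le_of_mem_prox {f : H → EReal} {y u v : H} (hlam : lam ≠ 0)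
    (hbot : ∀ x, f x ≠ ⊥) (hy : y ∈ Prox lam f (u - lam • v)) (hu : f u ≠ ⊤) :
    (f y).toReal + inner ℝ v (y - u) + 1 / (2 * lam) * ‖y - u‖ ^ 2 ≤ (f u).toReal := by
  have h := toReal_le_of_mem_prox hbot hy hu
  have hsplit :
      ‖u - lam • v - y‖ ^ 2 = ‖y - u‖ ^ 2 + 2 * lam * inner ℝ v (y - u) + ‖lam • v‖ ^ 2 := by
    rw [show u - lam • v - y = -((y - u) + lam • v) by abel, norm_neg, norm_add_sq_real,
      real_inner_smul_right, real_inner_comm]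
    ring
  rw [hsplit, sub_sub_cancel_left, norm_neg] at h
  have hcancel : 1 / (2 * lam) * (2 * lam * inner ℝ v (y - u)) = inner ℝ v (y - u) := by
    field_simp
  linarith

end Prox

theorem frb_step_descent [CompleteSpace H] {f : H → EReal} {g : H → ℝ} {g' : H → H} {L lam : ℝ}
    {a b c : H} (hbot : ∀ x, f x ≠ ⊥) (hdiff : ∀ x, HasGradientAt g (g' x) x) (hL : 0 ≤ L)
    (hlip : ∀ x y, ‖g' x - g' y‖ ≤ L * ‖x - y‖) (hlam : lam ≠ 0)
    (hc : c ∈ Prox lam f (b + lam • (g' a - g' b) - lam • g' b)) (hb : f b ≠ ⊤) :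
    (f c).toReal + g c + 1 / (4 * lam) * ‖c - b‖ ^ 2
        + (1 / (4 * lam) - L) * (‖c - b‖ ^ 2 + ‖b - a‖ ^ 2)
      ≤ (f b).toReal + g b + 1 / (4 * lam) * ‖b - a‖ ^ 2 := by
  have hc' : c ∈ Prox lam f (b - lam • (g' b - (g' a - g' b))) := by
    convert hc using 2
    module
  have hprox := toReal_add_inner_le_of_mem_prox hlam hbot hc' hb
  rw [inner_sub_left] at hprox
  have hdesc := le_add_inner_add_sq_of_lipschitz_gradient hdiff hlip b c
  have hreflect := inner_sub_le_of_lipschitz hlip a b (c - b)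
  have hamgm : L * ‖a - b‖ * ‖c - b‖ ≤ L / 2 * (‖b - a‖ ^ 2 + ‖c - b‖ ^ 2) := by
    rw [norm_sub_rev a b]
    nlinarith [mul_nonneg hL (sq_nonneg (‖b - a‖ - ‖c - b‖))]
  have hhalf : 1 / (2 * lam) = 2 * (1 / (4 * lam)) := by
    field_simp
    ring
  rw [hhalf] at hprox
  linarith [mul_nonneg hL (sq_nonneg ‖b - a‖)]

noncomputable section

variable {n : ℕ}

theorem frb_merit_descent_general
    (f : EuclideanSpace ℝ (Fin n) → EReal)
    (hproper : ProperFn f)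
    (g : EuclideanSpace ℝ (Fin n) → ℝ)
    (g' : EuclideanSpace ℝ (Fin n) → EuclideanSpace ℝ (Fin n))
    (hdiff : ∀ x, HasGradientAt g (g' x) x)
    (L : ℝ) (hL : 0 < L) (hlip : ∀ x y, ‖g' x - g' y‖ ≤ L * ‖x - y‖)
    (lam : ℝ) (hlam0 : 0 < lam)
    (x : ℕ → EuclideanSpace ℝ (Fin n))
    (hscheme : ∀ k : ℕ, 1 ≤ k →
      x (k + 1) ∈ Prox lam f
        (x k + lam • (g' (x (k - 1)) - g' (x k)) - lam • g' (x k)))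
    (z : ℕ → WithLp 2 (EuclideanSpace ℝ (Fin n) × EuclideanSpace ℝ (Fin n)))
    (hz : ∀ k, z k = (WithLp.equiv 2 _).symm (x (k + 1), x k))
    (Hf : WithLp 2 (EuclideanSpace ℝ (Fin n) × EuclideanSpace ℝ (Fin n)) → EReal)
    (hH : ∀ p, Hf p =
      f ((WithLp.equiv 2 _ p).1) +
        ((g ((WithLp.equiv 2 _ p).1) +
          1 / (4 * lam) * ‖(WithLp.equiv 2 _ p).1 - (WithLp.equiv 2 _ p).2‖ ^ 2 : ℝ) : EReal)) :
    ∀ k : ℕ, 1 ≤ k →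
      Hf (z k) + (((1 / (4 * lam) - L) * ‖z k - z (k - 1)‖ ^ 2 : ℝ) : EReal)
        ≤ Hf (z (k - 1)) := by
  intro k hk
  obtain ⟨m, rfl⟩ : ∃ m, k = m + 1 := ⟨k - 1, by omega⟩
  have hstep := hscheme (m + 1) (by omega)
  simp only [Nat.add_sub_cancel] at hstep ⊢
  have hnorm : ‖z (m + 1) - z m‖ ^ 2 = ‖x (m + 2) - x (m + 1)‖ ^ 2 + ‖x (m + 1) - x m‖ ^ 2 := by
    rw [hz, hz, WithLp.prod_norm_sq_eq_of_L2]
    rfl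
  rw [hnorm, hH, hH, hz, hz]
  simp only [Equiv.apply_symm_apply]
  by_cases hb : f (x (m + 1)) = ⊤
  · rw [hb, EReal.top_add_of_ne_bot (EReal.coe_ne_bot _)]
    exact le_top
  rw [← EReal.coe_toReal (ne_top_of_mem_prox hstep hb) (hproper.1 _),
    ← EReal.coe_toReal hb (hproper.1 _)]
  norm_cast
  linarith [frb_step_descent hproper.1 hdiff hL.le hlip hlam0.ne' hstep hb]

theorem frb_merit_descent
    (f : EuclideanSpace ℝ (Fin n) → EReal)
    (hproper : ProperFn f) (hlsc : LowerSemicontinuous f)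
    (lf : ℝ) (hlf : 0 < lf) (hpb : ProxBddWith f lf)
    (g : EuclideanSpace ℝ (Fin n) → ℝ)
    (g' : EuclideanSpace ℝ (Fin n) → EuclideanSpace ℝ (Fin n))
    (hdiff : ∀ x, HasGradientAt g (g' x) x)
    (L : ℝ) (hL : 0 < L) (hlip : ∀ x y, ‖g' x - g' y‖ ≤ L * ‖x - y‖)
    (lam : ℝ) (hlam0 : 0 < lam) (hlam1 : lam < 1 / (4 * L)) (hlam2 : lam < lf)
    (hinf : ∃ b : ℝ, ∀ x, (b : EReal) ≤ f x + (g x : EReal))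
    (x : ℕ → EuclideanSpace ℝ (Fin n))
    (hscheme : ∀ k : ℕ, 1 ≤ k →
      x (k + 1) ∈ Prox lam f
        (x k + lam • (g' (x (k - 1)) - g' (x k)) - lam • g' (x k)))
    (z : ℕ → WithLp 2 (EuclideanSpace ℝ (Fin n) × EuclideanSpace ℝ (Fin n)))
    (hz : ∀ k, z k = (WithLp.equiv 2 _).symm (x (k + 1), x k))
    (Hf : WithLp 2 (EuclideanSpace ℝ (Fin n) × EuclideanSpace ℝ (Fin n)) → EReal)
    (hH : ∀ p, Hf p =
      f ((WithLp.equiv 2 _ p).1) +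
        ((g ((WithLp.equiv 2 _ p).1) +
          1 / (4 * lam) * ‖(WithLp.equiv 2 _ p).1 - (WithLp.equiv 2 _ p).2‖ ^ 2 : ℝ) : EReal)) :
    ∀ k : ℕ, 1 ≤ k →
      Hf (z k) + (((1 / (4 * lam) - L) * ‖z k - z (k - 1)‖ ^ 2 : ℝ) : EReal)
        ≤ Hf (z (k - 1)) :=
  frb_merit_descent_general f hproper g g' hdiff L hL hlip lam hlam0 x hscheme z hz Hf hH
end
end

section
/- Let (a_k)_{k≥0} be a sequence of nonnegative reals and suppose there exist M > 0 and a nonincreasing sequence (b_k) of nonnegative reals with b_k → 0 such that for all k ≥ 1, 2 a_k ≤ a_{k−1} + M(b_{k−1} − b_k). Then ∑_{k=1}^∞ a_k < ∞, and for every i ≥ 1, ∑_{k=i}^∞ a_k ≤ a_{i−1} + M b_{i−1}. -/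
open Filter Topology

theorem summability_lemma (a b : ℕ → ℝ) (ha : ∀ k, 0 ≤ a k) (hb : ∀ k, 0 ≤ b k)
    (hbmono : Antitone b) (hb0 : Tendsto b atTop (nhds 0))
    (M : ℝ) (hM : 0 < M)
    (hrec : ∀ k, 1 ≤ k → 2 * a k ≤ a (k - 1) + M * (b (k - 1) - b k)) :
    Summable a ∧ ∀ i, 1 ≤ i → (∑' k : ℕ, a (k + i)) ≤ a (i - 1) + M * b (i - 1) := by
  have key : ∀ i, 1 ≤ i → ∀ n, ∑ k ∈ Finset.range n, a (k + i) ≤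
      a (i - 1) - a (n + i - 1) + M * (b (i - 1) - b (n + i - 1)) := by
    intro i hi n
    induction n with
    | zero => simp
    | succ n ih =>
      rw [Finset.sum_range_succ]
      have hr := hrec (n + i) (by omega)
      have h1 : n + i - 1 = n + i - 1 := rfl
      have h2 : n + 1 + i - 1 = n + i := by omega
      rw [h2]
      nlinarith [ih, hr]
  have bound : ∀ i, 1 ≤ i → ∀ n, ∑ k ∈ Finset.range n, a (k + i) ≤
      a (i - 1) + M * b (i - 1) := by
    intro i hi n
    have := key i hi n
    have h1 := ha (n + i - 1)
    have h2 := hb (n + i - 1)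
    nlinarith
  have hsum1 : Summable (fun k => a (k + 1)) :=
    summable_of_sum_range_le (fun k => ha (k + 1)) (bound 1 le_rfl)
  have hsum : Summable a := (summable_nat_add_iff 1).mp hsum1
  refine ⟨hsum, fun i hi => ?_⟩
  exact Summable.tsum_le_of_sum_range_le ((summable_nat_add_iff i).mpr hsum) (bound i hi)
end

section
/- Let l > 0 and r ≤ n, and let D = { x ∈ R^n : ‖x‖₀ ≤ r, ‖x‖_∞ ≤ l }. Given z ∈ R^n, for each i set z̃_i = Proj_{[−l,l]}(z_i) and v_i = |z_i|² − |z̃_i − z_i|², and let I* ⊆ {1,…,n} be a set of indices of the r largest values v_i. Define z* by z*_i = z̃_i for i ∈ I* and z*_i = 0 otherwise. Then z* is a projection of z onto D, i.e., z* ∈ argmin_{u ∈ D} ‖u − z‖. -/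
open Classical

noncomputable section

private lemma clamp_min_aux (l a t : ℝ) (hl : 0 < l) (ht : |t| ≤ l) :
    (max (-l) (min l a) - a) ^ 2 ≤ (t - a) ^ 2 := by
  rw [abs_le] at ht
  rcases le_total a (-l) with h1 | h1
  · rw [min_eq_right (by linarith), max_eq_left (by linarith)]
    nlinarith [ht.1, ht.2]
  · rcases le_total l a with h2 | h2
    · rw [min_eq_left h2, max_eq_right (by linarith)]
      nlinarith [ht.1, ht.2]
    · rw [min_eq_right h2, max_eq_right h1]
      nlinarith

/-- Projection formula onto `D = {x : ‖x‖₀ ≤ r, ‖x‖_∞ ≤ l}`: clip the `r` entries with the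
largest gains `v i = z i² − (z̃ i − z i)²` and set the others to zero. -/
theorem proj_sparse_box {n : ℕ} (l : ℝ) (hl : 0 < l) (r : ℕ) (hr : r ≤ n)
    (D : Set (EuclideanSpace ℝ (Fin n)))
    (hD : D = {x : EuclideanSpace ℝ (Fin n) |
      (Finset.univ.filter fun i => x i ≠ 0).card ≤ r ∧ ∀ i, |x i| ≤ l})
    (z : EuclideanSpace ℝ (Fin n))
    (zt : Fin n → ℝ) (hzt : ∀ i, zt i = max (-l) (min l (z i)))
    (v : Fin n → ℝ) (hv : ∀ i, v i = |z i| ^ 2 - |zt i - z i| ^ 2)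
    (I : Finset (Fin n)) (hIcard : I.card = r)
    (hIlarge : ∀ i ∈ I, ∀ j ∉ I, v j ≤ v i)
    (zstar : EuclideanSpace ℝ (Fin n))
    (hzstar : ∀ i, zstar i = if i ∈ I then zt i else 0) :
    zstar ∈ D ∧ ∀ u ∈ D, ‖zstar - z‖ ≤ ‖u - z‖ := by
  have hztle : ∀ i, |zt i| ≤ l := by
    intro i
    rw [hzt i, abs_le]
    constructor
    · exact le_max_left _ _
    · exact max_le (by linarith) (min_le_left _ _)
  have hle : ∀ (i : Fin n) (t : ℝ), |t| ≤ l → (zt i - z i) ^ 2 ≤ (t - z i) ^ 2 := by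
    intro i t ht
    rw [hzt i]
    exact clamp_min_aux l (z i) t hl ht
  have hv' : ∀ i, v i = z i ^ 2 - (zt i - z i) ^ 2 := by
    intro i; rw [hv i, sq_abs, sq_abs]
  have hvnn : ∀ i, 0 ≤ v i := by
    intro i
    have := hle i 0 (by simpa using hl.le)
    rw [hv' i]; nlinarith
  constructor
  · rw [hD]
    refine ⟨?_, ?_⟩
    · have hsub : (Finset.univ.filter fun i => zstar i ≠ 0) ⊆ I := by
        intro i hi
        simp only [Finset.mem_filter] at hi
        by_contra h
        exact hi.2 (by rw [hzstar i, if_neg h])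
      calc (Finset.univ.filter fun i => zstar i ≠ 0).card ≤ I.card :=
            Finset.card_le_card hsub
        _ = r := hIcard
    · intro i
      rw [hzstar i]
      split
      · exact hztle i
      · simpa using hl.le
  · intro u hu
    rw [hD] at hu
    obtain ⟨hucard, hul⟩ := hu
    set S : Finset (Fin n) := Finset.univ.filter fun i => u i ≠ 0 with hS
    -- key sum inequality
    have hScard : S.card ≤ I.card := by rw [hIcard]; exact hucard
    have hkey : ∑ i ∈ S, v i ≤ ∑ i ∈ I, v i := by
      have hc1 : (S \ I).card ≤ (I \ S).card := by
        have h1 := Finset.card_sdiff_add_card_inter S I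
        have h2 := Finset.card_sdiff_add_card_inter I S
        rw [Finset.inter_comm] at h2
        omega
      have hdiff : ∑ i ∈ S \ I, v i ≤ ∑ i ∈ I \ S, v i := by
        rcases (S \ I).eq_empty_or_nonempty with he | hne
        · rw [he, Finset.sum_empty]
          exact Finset.sum_nonneg fun i _ => hvnn i
        · have hne' : (I \ S).Nonempty := by
            rw [← Finset.card_pos]
            exact lt_of_lt_of_le (Finset.card_pos.mpr hne) hc1
          obtain ⟨i0, hi0, hi0min⟩ := Finset.exists_min_image (I \ S) v hne'
          have hi0I : i0 ∈ I := (Finset.mem_sdiff.mp hi0).1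
          calc ∑ i ∈ S \ I, v i ≤ ∑ _i ∈ S \ I, v i0 := by
                refine Finset.sum_le_sum fun j hj => ?_
                exact hIlarge i0 hi0I j (Finset.mem_sdiff.mp hj).2
            _ = (S \ I).card • v i0 := by rw [Finset.sum_const]
            _ ≤ (I \ S).card • v i0 := by
                have := hvnn i0
                exact nsmul_le_nsmul_left this hc1 |>.trans_eq rfl |>.trans_eq rfl
            _ ≤ ∑ i ∈ I \ S, v i := Finset.card_nsmul_le_sum _ _ _ hi0min
      calc ∑ i ∈ S, v i = ∑ i ∈ S ∩ I, v i + ∑ i ∈ S \ I, v i :=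
            (Finset.sum_inter_add_sum_sdiff S I v).symm
        _ ≤ ∑ i ∈ S ∩ I, v i + ∑ i ∈ I \ S, v i := by linarith
        _ = ∑ i ∈ I ∩ S, v i + ∑ i ∈ I \ S, v i := by rw [Finset.inter_comm]
        _ = ∑ i ∈ I, v i := Finset.sum_inter_add_sum_sdiff I S v
    -- squared norms
    have hsq : ∑ i, (zstar i - z i) ^ 2 ≤ ∑ i, (u i - z i) ^ 2 := by
      have hstar : ∑ i, (zstar i - z i) ^ 2
          = ∑ i, (z i ^ 2 - if i ∈ I then v i else 0) := by
        refine Finset.sum_congr rfl fun i _ => ?_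
        rw [hzstar i]
        split
        · rw [hv' i]; ring
        · ring
      have huge : ∀ i, (z i ^ 2 - if i ∈ S then v i else 0) ≤ (u i - z i) ^ 2 := by
        intro i
        split
        · have h1 := hle i (u i) (hul i)
          rw [hv' i]; linarith
        · next h =>
            have : u i = 0 := by
              by_contra h'
              exact h (by simp [hS, h'])
            rw [this]; ring_nf; exact le_refl _
      calc ∑ i, (zstar i - z i) ^ 2
          = ∑ i, z i ^ 2 - ∑ i ∈ I, v i := by
            rw [hstar, Finset.sum_sub_distrib]
            congr 1
            rw [Finset.sum_ite_mem, Finset.univ_inter]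
        _ ≤ ∑ i, z i ^ 2 - ∑ i ∈ S, v i := by linarith
        _ = ∑ i, (z i ^ 2 - if i ∈ S then v i else 0) := by
            rw [Finset.sum_sub_distrib]
            congr 1
            rw [Finset.sum_ite_mem, Finset.univ_inter]
        _ ≤ ∑ i, (u i - z i) ^ 2 := Finset.sum_le_sum fun i _ => huge i
    rw [EuclideanSpace.norm_eq, EuclideanSpace.norm_eq]
    apply Real.sqrt_le_sqrt
    simpa [sq_abs] using hsq
end
end

section
/- Let C ⊆ R^n be nonempty closed convex and D ⊆ R^n nonempty closed, and let F = δ_D + (1/2)dist²(·, C). Suppose x* satisfies 0 ∈ ∂F(x*) and the constraint qualification N_C(Proj_C(x*)) ∩ (−N_D(x*)) = {0}, where N_C is the convex normal cone and N_D the limiting normal cone. Then x* ∈ C ∩ D. -/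
/-!
Take Fréchet subgradients `vₖ` of `F` at points `xₖ → x*` with `vₖ → 0`. The function
`½ dist²(·, C)` lies below its linearization with slope `x - P x` up to `½‖y - x‖²`, so
`vₖ - (xₖ - P xₖ)` is a Fréchet normal to `D` at `xₖ`. The projection is nonexpansive, hence these
normals converge to `-(x* - P x*)`, a limiting normal to `D` at `x*`. Since `x* - P x*` is also a
normal to `C` at `P x*`, the constraint qualification forces `x* = P x* ∈ C`.
-/

open Filter Topology

variable {H : Type*} [NormedAddCommGroup H] [InnerProductSpace ℝ H]

open Classical

noncomputable section

/-- Convex normal cone of `C` at `p`. -/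
def ConvexNormalCone {H : Type*} [NormedAddCommGroup H] [InnerProductSpace ℝ H]
    (C : Set H) (p : H) : Set H :=
  {v | ∀ y ∈ C, (inner ℝ v (y - p) : ℝ) ≤ 0}

/-- Limiting normal cone of a closed set `D` at `p`, as the limiting subdifferential of the
indicator function of `D`. -/
def LimitingNormalCone {H : Type*} [NormedAddCommGroup H] [InnerProductSpace ℝ H]
    (D : Set H) (p : H) : Set H :=
  {v | LSubd (fun x => if x ∈ D then (0 : EReal) else ⊤) p v}

def erealIndicator (D : Set H) (x : H) : EReal :=
  if x ∈ D then 0 else ⊤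

def IsMetricProj {E : Type*} [NormedAddCommGroup E] (C : Set E) (P : E → E) : Prop :=
  ∀ x, P x ∈ C ∧ ∀ y ∈ C, ‖x - P x‖ ≤ ‖x - y‖

namespace IsMetricProj

lemma infDist_eq {E : Type*} [NormedAddCommGroup E] {C : Set E} {P : E → E}
    (hP : IsMetricProj C P) (x : E) : Metric.infDist x C = ‖x - P x‖ := by
  refine le_antisymm ?_ ?_
  · simpa [dist_eq_norm] using Metric.infDist_le_dist_of_mem (x := x) (hP x).1
  · exact (Metric.le_infDist ⟨P x, (hP x).1⟩).2 fun y hy => by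
      simpa [dist_eq_norm] using (hP x).2 y hy

variable {C : Set H} {P : H → H}

lemma inner_sub_le_zero (hP : IsMetricProj C P) (hC : Convex ℝ C) (x : H) {y : H}
    (hy : y ∈ C) : inner ℝ (x - P x) (y - P x) ≤ 0 := by
  have : Nonempty C := ⟨⟨P x, (hP x).1⟩⟩
  have hbdd : BddBelow (Set.range fun w : C => ‖x - (w : H)‖) :=
    ⟨0, by rintro _ ⟨w, rfl⟩; positivity⟩
  refine (norm_eq_iInf_iff_real_inner_le_zero hC (hP x).1).1 ?_ y hy
  exact le_antisymm (le_ciInf fun w => (hP x).2 w w.2) (ciInf_le hbdd ⟨P x, (hP x).1⟩)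

lemma mem_convexNormalCone (hP : IsMetricProj C P) (hC : Convex ℝ C) (x : H) :
    x - P x ∈ ConvexNormalCone C (P x) :=
  fun _ hy => hP.inner_sub_le_zero hC x hy

/-- Firm nonexpansiveness: adding the variational inequalities at `a` and `b` gives
`‖P a - P b‖² ≤ ⟪a - b, P a - P b⟫`. -/
lemma lipschitzWith_one (hP : IsMetricProj C P) (hC : Convex ℝ C) : LipschitzWith 1 P := by
  refine LipschitzWith.of_dist_le_mul fun a b => ?_
  simp only [NNReal.coe_one, one_mul, dist_eq_norm]
  have ha := hP.inner_sub_le_zero hC a (hP b).1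
  have hb := hP.inner_sub_le_zero hC b (hP a).1
  have hfirm : ‖P a - P b‖ ^ 2 ≤ inner ℝ (a - b) (P a - P b) := by
    have hsplit : a - b = (a - P a) - (b - P b) + (P a - P b) := by abel
    rw [hsplit, inner_add_left, inner_sub_left, real_inner_self_eq_norm_sq]
    rw [← neg_sub (P a) (P b), inner_neg_right] at ha
    linarith
  have hcs := real_inner_le_norm (a - b) (P a - P b)
  nlinarith [norm_nonneg (a - b), norm_nonneg (P a - P b)]

/-- The quadratic upper bound behind `∇ (½ dist²(·, C)) x = x - P x`: compare `dist(y, C)`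
with `‖y - P x‖`. -/
lemma half_infDist_sq_le (hP : IsMetricProj C P) (x y : H) :
    1 / 2 * Metric.infDist y C ^ 2 ≤
      1 / 2 * Metric.infDist x C ^ 2 + inner ℝ (x - P x) (y - x) + 1 / 2 * ‖y - x‖ ^ 2 := by
  have hle : Metric.infDist y C ≤ ‖y - P x‖ := by
    simpa [dist_eq_norm] using Metric.infDist_le_dist_of_mem (x := y) (hP x).1
  have hexpand : ‖y - P x‖ ^ 2 = ‖x - P x‖ ^ 2 + 2 * inner ℝ (x - P x) (y - x) + ‖y - x‖ ^ 2 := by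
    rw [← norm_add_sq_real, sub_add_sub_cancel']
  rw [hP.infDist_eq x]
  nlinarith [Metric.infDist_nonneg (x := y) (s := C)]

end IsMetricProj

lemma eventually_le_add_inner_add_of_le_quadratic {g : H → ℝ} {x w : H} {L : ℝ}
    (hg : ∀ y, g y ≤ g x + inner ℝ w (y - x) + L * ‖y - x‖ ^ 2) {ε : ℝ} (hε : 0 < ε) :
    ∀ᶠ y in 𝓝 x, g y ≤ g x + inner ℝ w (y - x) + ε * ‖y - x‖ := by
  have hsmall : ∀ᶠ y in 𝓝 x, L * ‖y - x‖ < ε := by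
    have := (tendsto_norm_sub_self x).const_mul L
    rw [mul_zero] at this
    exact this.eventually (gt_mem_nhds hε)
  filter_upwards [hsmall] with y hy
  nlinarith [hg y, norm_nonneg (y - x)]

lemma mem_of_fSubd_erealIndicator_add {D : Set H} {g : H → ℝ} {x v : H}
    (h : FSubd (fun y => erealIndicator D y + g y) x v) : x ∈ D := by
  by_contra hx
  exact h.1 (by simp [erealIndicator, hx])

/-- Fréchet sum rule for `δ_D + g`, where `w` is a Fréchet supergradient of `g` at `x`. -/
lemma fSubd_erealIndicator_sub {D : Set H} {g : H → ℝ} {x v w : H}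
    (h : FSubd (fun y => erealIndicator D y + g y) x v)
    (hg : ∀ ε > 0, ∀ᶠ y in 𝓝 x, g y ≤ g x + inner ℝ w (y - x) + ε * ‖y - x‖) :
    FSubd (erealIndicator D) x (v - w) := by
  have hx := mem_of_fSubd_erealIndicator_add h
  refine ⟨by simp [erealIndicator, hx], fun ε hε => ?_⟩
  obtain ⟨δ, hδ, hsub⟩ := h.2 (ε / 2) (half_pos hε)
  obtain ⟨δ', hδ', hsup⟩ := Metric.eventually_nhds_iff.1 (hg (ε / 2) (half_pos hε))
  refine ⟨min δ δ', lt_min hδ hδ', fun y hy => ?_⟩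
  by_cases hyD : y ∈ D
  · have hfs := hsub y (hy.trans_le (min_le_left _ _))
    have hgy := hsup (show dist y x < δ' by
      rw [dist_eq_norm]; exact hy.trans_le (min_le_right _ _))
    simp only [erealIndicator, hx, hyD, if_true, zero_add] at hfs ⊢
    rw [← EReal.coe_add, EReal.coe_le_coe_iff] at hfs
    rw [inner_sub_left]
    exact_mod_cast (by linarith : inner ℝ v (y - x) - inner ℝ w (y - x) - ε * ‖y - x‖ ≤ 0)
  · simp [erealIndicator, hyD]

/-- For a closed set, limits of Fréchet normals are limiting normals: the convergence of the
indicator values is automatic, since they all vanish. -/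
lemma mem_limitingNormalCone_of_tendsto {D : Set H} (hD : IsClosed D) {x u : H}
    {xs us : ℕ → H} (hxs : Tendsto xs atTop (𝓝 x))
    (hus : ∀ k, FSubd (erealIndicator D) (xs k) (us k)) (hu : Tendsto us atTop (𝓝 u)) :
    u ∈ LimitingNormalCone D x := by
  have hxsD : ∀ k, xs k ∈ D := fun k => by
    by_contra h
    exact (hus k).1 (by simp [erealIndicator, h])
  have hxD : x ∈ D := hD.mem_of_tendsto hxs (.of_forall hxsD)
  refine ⟨xs, us, hxs, ?_, hus, hu⟩
  simp only [hxsD, hxD, if_true]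
  exact tendsto_const_nhds

theorem stationary_point_feasible_general {n : ℕ}
    (C : Set (EuclideanSpace ℝ (Fin n)))
    (hCconv : Convex ℝ C)
    (D : Set (EuclideanSpace ℝ (Fin n))) (hD : IsClosed D)
    (proj : EuclideanSpace ℝ (Fin n) → EuclideanSpace ℝ (Fin n))
    (hproj : ∀ x, proj x ∈ C ∧ ∀ y ∈ C, ‖x - proj x‖ ≤ ‖x - y‖)
    (F : EuclideanSpace ℝ (Fin n) → EReal)
    (hF : ∀ x, F x = (if x ∈ D then (0 : EReal) else ⊤) +
      ((1 / 2 * Metric.infDist x C ^ 2 : ℝ) : EReal))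
    (xstar : EuclideanSpace ℝ (Fin n))
    (hstat : LSubd F xstar 0)
    (hCQ : ∀ v, v ∈ ConvexNormalCone C (proj xstar) →
      -v ∈ LimitingNormalCone D xstar → v = 0) :
    xstar ∈ C ∧ xstar ∈ D := by
  have hP : IsMetricProj C proj := hproj
  obtain ⟨xs, vs, hxs, -, hFs, hvs⟩ := hstat
  rw [show F = fun y => erealIndicator D y + ((1 / 2 * Metric.infDist y C ^ 2 : ℝ) : EReal)
    from funext hF] at hFs
  have hnormal : ∀ k, FSubd (erealIndicator D) (xs k) (vs k - (xs k - proj (xs k))) :=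
    fun k => fSubd_erealIndicator_sub (hFs k)
      (fun _ hε => eventually_le_add_inner_add_of_le_quadratic (hP.half_infDist_sq_le _) hε)
  have hlim : Tendsto (fun k => vs k - (xs k - proj (xs k))) atTop
      (𝓝 (0 - (xstar - proj xstar))) :=
    hvs.sub (hxs.sub (((hP.lipschitzWith_one hCconv).continuous.tendsto xstar).comp hxs))
  rw [zero_sub] at hlim
  have hxD : xstar ∈ D := hD.mem_of_tendsto hxs (.of_forall fun k =>
    mem_of_fSubd_erealIndicator_add (hFs k))
  have hfixed : xstar - proj xstar = 0 :=
    hCQ _ (hP.mem_convexNormalCone hCconv xstar)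
      (mem_limitingNormalCone_of_tendsto hD hxs hnormal hlim)
  exact ⟨sub_eq_zero.1 hfixed ▸ (hP xstar).1, hxD⟩

/-- If `0 ∈ ∂F(x*)` for `F = δ_D + (1/2)dist²(·,C)` and the constraint qualification
`N_C(Proj_C x*) ∩ (−N_D(x*)) = {0}` holds, then `x* ∈ C ∩ D`. -/
theorem stationary_point_feasible {n : ℕ}
    (C : Set (EuclideanSpace ℝ (Fin n))) (hCne : C.Nonempty)
    (hC : IsClosed C) (hCconv : Convex ℝ C)
    (D : Set (EuclideanSpace ℝ (Fin n))) (hDne : D.Nonempty) (hD : IsClosed D)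
    (proj : EuclideanSpace ℝ (Fin n) → EuclideanSpace ℝ (Fin n))
    (hproj : ∀ x, proj x ∈ C ∧ ∀ y ∈ C, ‖x - proj x‖ ≤ ‖x - y‖)
    (F : EuclideanSpace ℝ (Fin n) → EReal)
    (hF : ∀ x, F x = (if x ∈ D then (0 : EReal) else ⊤) +
      ((1 / 2 * Metric.infDist x C ^ 2 : ℝ) : EReal))
    (xstar : EuclideanSpace ℝ (Fin n))
    (hstat : LSubd F xstar 0)
    (hCQ : ∀ v, v ∈ ConvexNormalCone C (proj xstar) →
      -v ∈ LimitingNormalCone D xstar → v = 0) :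
    xstar ∈ C ∧ xstar ∈ D :=
  stationary_point_feasible_general C hCconv D hD proj hproj F hF xstar hstat hCQ
end
end
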